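/- The maximal game length of the ordered Zeckendorf game satisfies the refined upper bound M(n) ≤ n²/2 − (1/32)·n·log_φ(n) + o(n·log_φ(n)) as n → ∞; equivalently, for every ε > 0 there exists N such that for all n ≥ N, M(n) ≤ n²/2 − (1/32 − ε)·n·log_φ(n), where φ = (1+√5)/2 is the golden ratio. -/

import Mathlib

/-- Fibonacci numbers indexed so that `F 1 = 1`, `F 2 = 2`,
and `F (i+1) = F i + F (i-1)`. -/
def F (i : ℕ) : ℕ := Nat.fib (i + 1)

/-- A single legal move of the ordered Zeckendorf game, acting on an
adjacent pair of entries of the list of indices. -/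
inductive Move : List ℕ → List ℕ → Prop
  | merge (a b : List ℕ) (i : ℕ) (hi : 1 ≤ i) :
      Move (a ++ [i, i + 1] ++ b) (a ++ [i + 2] ++ b)
  | mergeOnes (a b : List ℕ) :
      Move (a ++ [1, 1] ++ b) (a ++ [2] ++ b)
  | split (a b : List ℕ) (i : ℕ) (hi : 2 < i) :
      Move (a ++ [i, i] ++ b) (a ++ [i - 2, i + 1] ++ b)
  | splitTwos (a b : List ℕ) :
      Move (a ++ [2, 2] ++ b) (a ++ [1, 3] ++ b)
  | switch (a b : List ℕ) (i j : ℕ) (hj : 1 ≤ j) (hij : j < i) :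
      Move (a ++ [i, j] ++ b) (a ++ [j, i] ++ b)

/-- A play of the ordered Zeckendorf game on `n` with `m` moves:
the initial state is `n` copies of `1`, and each step is a legal move. -/
def IsPlay (n : ℕ) (s : ℕ → List ℕ) (m : ℕ) : Prop :=
  s 0 = List.replicate n 1 ∧ ∀ t < m, Move (s t) (s (t + 1))

/-- A state is terminal if no legal move applies to it. -/
def Terminal (S : List ℕ) : Prop := ∀ T, ¬ Move S T

/-- The total Fibonacci value of a state. -/
def val (S : List ℕ) : ℕ := (S.map F).sum

/-- The monovariant `f(S) = Σ_{j=1}^k (k+1−j)·F_{i_j}` (here with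
`j` running over 0-based positions, so the weight of position `j` is
`k − j`). -/
def f (S : List ℕ) : ℕ := ∑ j : Fin S.length, (S.length - (j : ℕ)) * F (S.get j)

/-- `M n` is the maximal number of moves in a completed play of the
ordered Zeckendorf game on `n`. -/
noncomputable def M (n : ℕ) : ℕ :=
  sSup {m | ∃ s : ℕ → List ℕ, IsPlay n s m ∧ Terminal (s m)}

/-- The golden ratio `φ = (1+√5)/2`. -/
noncomputable def phi : ℝ := (1 + Real.sqrt 5) / 2

/-- Logarithm to base `φ`. -/
noncomputable def logphi (x : ℝ) : ℝ := Real.log x / Real.log phi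

/-!
Every move lowers the potential `f S + Σ weight i` by at least one, where `weight` makes merges
lower it by exactly one. On `n` ones the potential is `n (n + 1) / 2`. A terminal state is the
Zeckendorf representation of `n`; with largest index `d` we have `F d > n / 2` and
`d ≥ log_φ n - 1`, and its potential is at least `n + weight d ≥ n + d F d / 8`. Hence every
completed play has at most `n² / 2 - n log_φ n / 16` moves once `n ≥ 34`.
-/

lemma F_pos (i : ℕ) : 0 < F i := Nat.fib_pos.mpr i.succ_pos

lemma F_add_two (i : ℕ) : F (i + 2) = F (i + 1) + F i := by
  rw [F, F, F, show i + 2 + 1 = i + 1 + 2 by ring, Nat.fib_add_two, add_comm]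

lemma F_mono {i j : ℕ} (h : i ≤ j) : F i ≤ F j := Nat.fib_mono (by omega)

lemma F_lt_F {i j : ℕ} (hi : 1 ≤ i) (hij : i < j) : F i < F j :=
  (Nat.fib_lt_fib_succ (by omega)).trans_le (Nat.fib_mono (by omega))

lemma lt_F_succ (n : ℕ) : n < F (n + 1) := by
  induction n with
  | zero => exact F_pos 1
  | succ n ih => have := F_pos n; rw [F_add_two]; omega

/-- Chosen so that the merge `(i, i + 1) ↦ (i + 2)` lowers `potential` by exactly one. -/
def weight : ℕ → ℕ
  | 0 | 1 | 2 => 0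
  | u + 3 => weight (u + 2) + weight (u + 1) + (F (u + 1) - 1)

lemma weight_add_two {i : ℕ} (hi : 1 ≤ i) :
    weight (i + 2) + 1 = weight (i + 1) + weight i + F i := by
  obtain ⟨u, rfl⟩ : ∃ u, i = u + 1 := ⟨i - 1, by omega⟩
  have := F_pos (u + 1)
  show weight (u + 3) + 1 = weight (u + 2) + weight (u + 1) + F (u + 1)
  rw [weight]
  omega

def potential (S : List ℕ) : ℕ := f S + (S.map weight).sum

@[simp] lemma val_nil : val [] = 0 := rfl

@[simp] lemma val_cons (x : ℕ) (S : List ℕ) : val (x :: S) = F x + val S := by simp [val]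

@[simp] lemma val_append (S T : List ℕ) : val (S ++ T) = val S + val T := by simp [val]

lemma f_cons (x : ℕ) (S : List ℕ) : f (x :: S) = (S.length + 1) * F x + f S := by
  simp [f, Fin.sum_univ_succ]

lemma f_append (S T : List ℕ) : f (S ++ T) = f S + T.length * val S + f T := by
  induction S with
  | nil => simp [f, val]
  | cons x S ih => simp only [List.cons_append, f_cons, ih, List.length_append, val_cons]; ring

lemma val_le_f (S : List ℕ) : val S ≤ f S := by
  induction S with
  | nil => simp [f, val]
  | cons x S ih => rw [f_cons, val_cons]; nlinarith

@[simp] lemma potential_singleton (x : ℕ) : potential [x] = F x + weight x := by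
  simp [potential, f]

@[simp] lemma potential_pair (x y : ℕ) :
    potential [x, y] = 2 * F x + F y + weight x + weight y := by
  simp [potential, f]; ring

structure LocalStep (m m' : List ℕ) : Prop where
  -- `f` weighs each entry by the number of entries from it to the end
  length_le : m'.length ≤ m.length
  val_eq : val m' = val m
  potential_lt : potential m' < potential m
  pos : ∀ x ∈ m', 1 ≤ x

lemma LocalStep.potential_append_lt {m m' : List ℕ} (h : LocalStep m m') (a b : List ℕ) :
    potential (a ++ m' ++ b) < potential (a ++ m ++ b) := by
  have hlen : (m'.length + b.length) * val a ≤ (m.length + b.length) * val a :=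
    Nat.mul_le_mul_right _ (by have := h.length_le; omega)
  have := h.potential_lt
  simp only [potential, List.append_assoc, f_append, List.length_append, List.map_append,
    List.sum_append, h.val_eq] at *
  omega

lemma localStep_merge {i : ℕ} (hi : 1 ≤ i) : LocalStep [i, i + 1] [i + 2] := by
  have := F_add_two i
  have := weight_add_two hi
  exact ⟨by simp, by simp; omega, by simp; omega, by simp⟩

lemma localStep_mergeOnes : LocalStep [1, 1] [2] :=
  ⟨by simp, by decide, by decide, by simp⟩

lemma localStep_split {i : ℕ} (hi : 2 < i) : LocalStep [i, i] [i - 2, i + 1] := by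
  obtain ⟨j, rfl⟩ : ∃ j, i = j + 3 := ⟨i - 3, by omega⟩
  have : F (j + 3) = F (j + 2) + F (j + 1) := F_add_two (j + 1)
  have : F (j + 4) = F (j + 3) + F (j + 2) := F_add_two (j + 2)
  have : weight (j + 3) + 1 = weight (j + 2) + weight (j + 1) + F (j + 1) :=
    weight_add_two (by omega)
  have : weight (j + 4) + 1 = weight (j + 3) + weight (j + 2) + F (j + 2) :=
    weight_add_two (by omega)
  have := F_pos (j + 1)
  show LocalStep [j + 3, j + 3] [j + 3 - 2, j + 4]
  rw [show j + 3 - 2 = j + 1 by omega]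
  exact ⟨by simp, by simp; omega, by simp; omega, by simp⟩

lemma localStep_splitTwos : LocalStep [2, 2] [1, 3] :=
  ⟨by simp, by decide, by decide, by simp⟩

lemma localStep_switch {i j : ℕ} (hj : 1 ≤ j) (hij : j < i) : LocalStep [i, j] [j, i] := by
  have := F_lt_F hj hij
  exact ⟨by simp, by simp; omega, by simp; omega, by simp; omega⟩

lemma Move.exists_localStep {S T : List ℕ} (h : Move S T) :
    ∃ a b m m', S = a ++ m ++ b ∧ T = a ++ m' ++ b ∧ LocalStep m m' := by
  cases h with
  | merge a b i hi => exact ⟨a, b, _, _, rfl, rfl, localStep_merge hi⟩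
  | mergeOnes a b => exact ⟨a, b, _, _, rfl, rfl, localStep_mergeOnes⟩
  | split a b i hi => exact ⟨a, b, _, _, rfl, rfl, localStep_split hi⟩
  | splitTwos a b => exact ⟨a, b, _, _, rfl, rfl, localStep_splitTwos⟩
  | switch a b i j hj hij => exact ⟨a, b, _, _, rfl, rfl, localStep_switch hj hij⟩

lemma Move.val_eq {S T : List ℕ} (h : Move S T) : val T = val S := by
  obtain ⟨a, b, m, m', rfl, rfl, hm⟩ := h.exists_localStep
  simp [hm.val_eq]

lemma Move.potential_lt {S T : List ℕ} (h : Move S T) : potential T < potential S := by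
  obtain ⟨a, b, m, m', rfl, rfl, hm⟩ := h.exists_localStep
  exact hm.potential_append_lt a b

lemma Move.pos {S T : List ℕ} (h : Move S T) (hS : ∀ x ∈ S, 1 ≤ x) : ∀ x ∈ T, 1 ≤ x := by
  obtain ⟨a, b, m, m', rfl, rfl, hm⟩ := h.exists_localStep
  simp only [List.mem_append] at hS ⊢
  rintro x ((hx | hx) | hx)
  exacts [hS x (.inl (.inl hx)), hm.pos x hx, hS x (.inr hx)]

lemma Terminal.tail {x : ℕ} {S : List ℕ} (h : Terminal (x :: S)) : Terminal S := by
  intro T hT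
  cases hT with
  | merge a b i hi => exact h _ (by simpa using Move.merge (x :: a) b i hi)
  | mergeOnes a b => exact h _ (by simpa using Move.mergeOnes (x :: a) b)
  | split a b i hi => exact h _ (by simpa using Move.split (x :: a) b i hi)
  | splitTwos a b => exact h _ (by simpa using Move.splitTwos (x :: a) b)
  | switch a b i j hj hij => exact h _ (by simpa using Move.switch (x :: a) b i j hj hij)

lemma Terminal.add_two_le {x y : ℕ} {S : List ℕ} (h : Terminal (x :: y :: S))
    (hx : 1 ≤ x) (hy : 1 ≤ y) : x + 2 ≤ y := by
  by_contra hxy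
  obtain hyx | rfl | rfl : y < x ∨ y = x ∨ y = x + 1 := by omega
  · exact h _ (by simpa using Move.switch [] S x y hy hyx)
  · obtain rfl | rfl | hy2 : y = 1 ∨ y = 2 ∨ 2 < y := by omega
    · exact h _ (by simpa using Move.mergeOnes [] S)
    · exact h _ (by simpa using Move.splitTwos [] S)
    · exact h _ (by simpa using Move.split [] S y hy2)
  · exact h _ (by simpa using Move.merge [] S x hx)

lemma Terminal.isChain {T : List ℕ} (h : Terminal T) (hpos : ∀ x ∈ T, 1 ≤ x) :
    T.IsChain (fun x y => x + 2 ≤ y) := by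
  induction T with
  | nil => exact .nil
  | cons x S ih =>
    cases S with
    | nil => exact .singleton x
    | cons y S =>
      refine .cons_cons (h.add_two_le (hpos x (by simp)) (hpos y (by simp))) ?_
      exact ih h.tail (fun z hz => hpos z (List.mem_cons_of_mem x hz))

/-- A terminal state, read backwards with indices shifted to Mathlib's `Nat.fib`, is a
Zeckendorf representation. -/
lemma Terminal.isZeckendorfRep {T : List ℕ} (h : Terminal T) (hpos : ∀ x ∈ T, 1 ≤ x) :
    (T.map (· + 1)).reverse.IsZeckendorfRep := by
  rw [List.IsZeckendorfRep, ← List.reverse_cons, List.isChain_reverse]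
  cases T with
  | nil => simp
  | cons x S =>
    rw [List.map_cons, List.isChain_cons_cons]
    exact ⟨by have := hpos x (by simp); omega,
      List.isChain_map_of_isChain _ (fun a b hab => by omega) (h.isChain hpos)⟩

lemma Terminal.val_lt_F {T : List ℕ} (h : Terminal T) (hpos : ∀ x ∈ T, 1 ≤ x) {d : ℕ}
    (hd : ∀ x ∈ T, x ≤ d) : val T < F (d + 1) := by
  have hval : val T = ((T.map (· + 1)).reverse.map Nat.fib).sum := by
    rw [List.map_reverse, List.sum_reverse, List.map_map]; rfl
  rw [hval]
  refine (h.isZeckendorfRep hpos).sum_fib_lt fun a ha => ?_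
  have := List.mem_of_mem_head? ha
  simp only [List.mem_append, List.mem_reverse, List.mem_map, List.mem_singleton] at this
  rcases this with ⟨x, hx, rfl⟩ | rfl
  · have := hd x hx; omega
  · omega

lemma IsPlay.invariants {n m : ℕ} {s : ℕ → List ℕ} (hp : IsPlay n s m) {t : ℕ} (ht : t ≤ m) :
    (∀ x ∈ s t, 1 ≤ x) ∧ val (s t) = n ∧ potential (s t) + t ≤ potential (s 0) := by
  induction t with
  | zero => simp [hp.1, val, F]
  | succ t ih =>
    obtain ⟨hpos, hval, hpot⟩ := ih (by omega)
    have hmove := hp.2 t (by omega)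
    exact ⟨hmove.pos hpos, hmove.val_eq.trans hval, by have := hmove.potential_lt; omega⟩

lemma two_mul_potential_replicate_one (n : ℕ) :
    2 * potential (List.replicate n 1) = n * (n + 1) := by
  induction n with
  | zero => rfl
  | succ n ih =>
    simp only [potential, List.replicate_succ, f_cons, List.length_replicate, List.map_cons,
      List.sum_cons] at ih ⊢
    rw [show F 1 = 1 from rfl, show weight 1 = 0 from rfl]
    linarith

lemma val_add_weight_le_potential {S : List ℕ} {d : ℕ} (hd : d ∈ S) :
    val S + weight d ≤ potential S :=
  Nat.add_le_add (val_le_f S) (List.le_sum_of_mem (List.mem_map_of_mem hd))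

lemma IsPlay.exists_bound {n m : ℕ} {s : ℕ → List ℕ} (hn : 0 < n) (hp : IsPlay n s m)
    (ht : Terminal (s m)) : ∃ d, n < F (d + 1) ∧ 2 * (m + n + weight d) ≤ n * (n + 1) := by
  obtain ⟨hpos, hval, hpot⟩ := hp.invariants le_rfl
  have hne : s m ≠ [] := by rintro h; simp [h] at hval; omega
  obtain ⟨d, hdmax⟩ := Option.isSome_iff_exists.mp (List.isSome_max?_of_ne_nil hne)
  obtain ⟨hd, hmax⟩ := List.max?_eq_some_iff.mp hdmax
  refine ⟨d, hval ▸ ht.val_lt_F hpos hmax, ?_⟩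
  have := val_add_weight_le_potential hd
  have := two_mul_potential_replicate_one n
  rw [hp.1] at hpot
  omega

lemma mul_F_le_eight_mul_weight {u : ℕ} (hu : 8 ≤ u) : u * F u ≤ 8 * weight u := by
  induction u using Nat.strong_induction_on with
  | _ u ih =>
    obtain rfl | rfl | hu : u = 8 ∨ u = 9 ∨ 10 ≤ u := by omega
    · decide
    · decide
    obtain ⟨v, rfl⟩ : ∃ v, u = v + 3 := ⟨u - 3, by omega⟩
    have h2 := ih (v + 2) (by omega) (by omega)
    have h1 := ih (v + 1) (by omega) (by omega)
    have hw : weight (v + 3) + 1 = weight (v + 2) + weight (v + 1) + F (v + 1) :=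
      weight_add_two (by omega)
    have hF3 : F (v + 3) = F (v + 2) + F (v + 1) := F_add_two (v + 1)
    have hF2 : F (v + 2) = F (v + 1) + F v := F_add_two v
    have hFv : F v ≤ F (v + 1) := F_mono (by omega)
    have hF1 : F 2 ≤ F (v + 1) := F_mono (by omega)
    have : F 2 = 2 := rfl
    nlinarith

lemma one_lt_phi : 1 < phi := Real.one_lt_goldenRatio

lemma F_le_phi_pow (d : ℕ) : (F d : ℝ) ≤ phi ^ d := by
  show (Nat.fib (d + 1) : ℝ) ≤ Real.goldenRatio ^ d
  have h := Real.goldenRatio_mul_fib_succ_add_fib d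
  have : (0 : ℝ) ≤ Nat.fib d := Nat.cast_nonneg _
  refine le_of_mul_le_mul_left ?_ Real.goldenRatio_pos
  rw [← pow_succ', ← h]
  linarith

lemma logphi_le_of_lt_F {n d : ℕ} (hn : 0 < n) (h : n < F d) : logphi n ≤ d := by
  rw [logphi, div_le_iff₀ (Real.log_pos one_lt_phi), ← Real.log_pow]
  have : (n : ℝ) ≤ F d := by exact_mod_cast h.le
  exact Real.log_le_log (by exact_mod_cast hn) (this.trans (F_le_phi_pow d))

lemma logphi_natCast_nonneg (n : ℕ) : 0 ≤ logphi n :=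
  div_nonneg (Real.log_natCast_nonneg n) (Real.log_nonneg one_lt_phi.le)

lemma IsPlay.length_le {n m : ℕ} {s : ℕ → List ℕ} (hn : 34 ≤ n) (hp : IsPlay n s m)
    (ht : Terminal (s m)) : (m : ℝ) ≤ n ^ 2 / 2 - n * logphi n / 16 := by
  obtain ⟨d, hnd, hm⟩ := hp.exists_bound (by omega) ht
  have hd : 8 ≤ d := by
    by_contra! hd
    have : F (d + 1) ≤ F 8 := F_mono (by omega)
    have : F 8 = 34 := rfl
    omega
  have hnF : n < 2 * F d := by
    have : F (d + 1) = F d + F (d - 1) := by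
      rw [show d + 1 = (d - 1) + 2 by omega, F_add_two, show d - 1 + 1 = d by omega]
    have : F (d - 1) ≤ F d := F_mono (by omega)
    omega
  have hL : logphi n ≤ d + 1 := by exact_mod_cast logphi_le_of_lt_F (by omega) hnd
  have hw := mul_F_le_eight_mul_weight hd
  have hmR : 2 * ((m : ℝ) + n + weight d) ≤ n * (n + 1) := by exact_mod_cast hm
  have hnFR : (n : ℝ) ≤ 2 * F d := by exact_mod_cast hnF.le
  have hwR : (d : ℝ) * F d ≤ 8 * weight d := by exact_mod_cast hw
  have hnd : (n : ℝ) * logphi n ≤ n * (d + 1) := by gcongr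
  have : (d : ℝ) * n ≤ d * (2 * F d) := by gcongr
  nlinarith

lemma M_le_of_forall {n : ℕ} {B : ℝ} (hB : 0 ≤ B)
    (h : ∀ s m, IsPlay n s m → Terminal (s m) → (m : ℝ) ≤ B) : (M n : ℝ) ≤ B := by
  have : M n ≤ ⌊B⌋₊ := csSup_le' fun m ⟨s, hp, ht⟩ => Nat.le_floor (h s m hp ht)
  exact (Nat.cast_le.mpr this).trans (Nat.floor_le hB)

lemma M_le {n : ℕ} (hn : 34 ≤ n) : (M n : ℝ) ≤ n ^ 2 / 2 - n * logphi n / 16 := by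
  refine M_le_of_forall ?_ fun s m hp ht => hp.length_le hn ht
  have hL : logphi n ≤ n + 1 := by exact_mod_cast logphi_le_of_lt_F (by omega) (lt_F_succ n)
  have hnR : (34 : ℝ) ≤ n := by exact_mod_cast hn
  have : (n : ℝ) * logphi n ≤ n * (n + 1) := by gcongr
  nlinarith

theorem stmt_16 :
    ∀ ε : ℝ, 0 < ε → ∃ N : ℕ, ∀ n : ℕ, N ≤ n →
      (M n : ℝ) ≤ (n : ℝ) ^ 2 / 2 - (1 / 32 - ε) * n * logphi n := by
  intro ε hε
  refine ⟨34, fun n hn => (M_le hn).trans ?_⟩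
  have := mul_nonneg (Nat.cast_nonneg n) (logphi_natCast_nonneg n)
  nlinarith
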